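/- Let n ≥ 1 and let A be the complex algebra with basis e_0, e_1, …, e_n and multiplication e_i ⋄ e_j = (i/(j+1))·e_{i+j} if i+j ≤ n and e_i ⋄ e_j = 0 otherwise (the algebra IDD(K^0_n, 1, −1)). Then Der(A) is the one-dimensional linear span of the derivation φ defined on the basis by φ(e_i) = i·e_i for 0 ≤ i ≤ n. -/

import Mathlib

/-- The basis index set `{0, …, n}`. -/
abbrev Ix (n : ℕ) := ↥(Finset.Icc 0 n)

/-- The vector space with basis `e_0, …, e_n`; the `p`-th coordinate of a vector is its
coefficient at `e_p` (so `e_i = Pi.single i 1`). -/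
abbrev V (n : ℕ) := Ix n → ℂ

/-- The multiplication of `IDD(K^0_n, 1, −1)`: `e_i ⋄ e_j = (i/(j+1))·e_{i+j}` if `i+j ≤ n` and `0` otherwise. -/
noncomputable def mulA (n : ℕ) (x y : V n) : V n := fun p =>
  ∑ i : Ix n, ∑ j : Ix n, x i * y j * (if i.1 + j.1 = p.1 then (i.1 : ℂ) * ((j.1 : ℂ) + 1)⁻¹ else 0)

/-- `D` is a derivation of `IDD(K^0_n, 1, −1)`. -/
def IsDer (n : ℕ) (D : V n →ₗ[ℂ] V n) : Prop :=
  ∀ x y, D (mulA n x y) = mulA n (D x) y + mulA n x (D y)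

/-- The derivation `φ(e_i) = i·e_i`. -/
noncomputable def phiD (n : ℕ) : V n →ₗ[ℂ] V n :=
  Matrix.mulVecLin (fun p s : Ix n => if p = s then (s.1 : ℂ) else 0)

/-!
Right multiplication by `e₀` is `φ`, and left multiplication by `e₀` vanishes. Applying a derivation
`D` to `e₀ ⋄ e₀ = 0` gives `φ (D e₀) = 0`, so `D e₀ = c e₀`; applying it to `x ⋄ e₀ = φ x` gives
`D φ - φ D = c φ`. Comparing the coefficients of `D e_i` against the distinct eigenvalues of `φ`
shows that `D` is diagonal, `D e_i = λ_i e_i`, and that `c = 0` since `φ` has the nonzero eigenvalue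
`1`. Finally `e₁ ⋄ e_k` is a nonzero multiple of `e_{k+1}`, so `λ_{k+1} = λ_1 + λ_k`, whence
`λ_k = k λ_1` and `D = λ_1 φ`.
-/

instance (n : ℕ) : Zero (Ix n) := ⟨⟨0, by simp⟩⟩

@[simp] theorem Ix.coe_zero (n : ℕ) : ((0 : Ix n) : ℕ) = 0 := rfl

theorem apply_eq_mul_of_isDiag_toMatrix' {ι R : Type*} [Fintype ι] [DecidableEq ι] [CommSemiring R]
    {f : (ι → R) →ₗ[R] ι → R} (hf : (LinearMap.toMatrix' f).IsDiag) (x : ι → R) (p : ι) :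
    f x p = f (Pi.single p 1) p * x p := by
  conv_lhs => rw [← Matrix.toLin'_toMatrix' f, Matrix.toLin'_apply, ← hf.diagonal_diag,
    Matrix.mulVec_diagonal]
  rfl

theorem phiD_apply (n : ℕ) (x : V n) (p : Ix n) : phiD n x p = p.1 * x p := by
  change Matrix.mulVec (Matrix.of fun p s : Ix n => if p = s then (s.1 : ℂ) else 0) x p = _
  simp [Matrix.mulVec, dotProduct]

theorem phiD_single {n : ℕ} (i : Ix n) (a : ℂ) :
    phiD n (Pi.single i a) = (i.1 : ℂ) • Pi.single i a := by
  ext p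
  rcases eq_or_ne p i with rfl | hp <;> simp [phiD_apply, *]

theorem mulA_single_single_apply {n : ℕ} (i j p : Ix n) (a b : ℂ) :
    mulA n (Pi.single i a) (Pi.single j b) p =
      if i.1 + j.1 = p.1 then a * b * (i.1 * ((j.1 : ℂ) + 1)⁻¹) else 0 := by
  dsimp only [mulA]
  rw [Fintype.sum_eq_single i fun i' hi' => by simp [hi'],
    Fintype.sum_eq_single j fun j' hj' => by simp [hj']]
  simp

theorem mulA_single_zero_left {n : ℕ} (a : ℂ) (y : V n) : mulA n (Pi.single 0 a) y = 0 := by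
  ext p
  refine Finset.sum_eq_zero fun i _ => Finset.sum_eq_zero fun j _ => ?_
  rcases eq_or_ne i 0 with rfl | hi
  · simp
  · simp [hi]

theorem mulA_single_zero_right {n : ℕ} (x : V n) (a : ℂ) :
    mulA n x (Pi.single 0 a) = a • phiD n x := by
  ext p
  dsimp only [mulA]
  rw [Finset.sum_comm, Fintype.sum_eq_single 0 fun j hj => by simp [hj],
    Fintype.sum_eq_single p fun i hi => by simp [hi]]
  simp [phiD_apply]
  ring

theorem mulA_smul_left {n : ℕ} (c : ℂ) (x y : V n) : mulA n (c • x) y = c • mulA n x y := by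
  ext p
  simp only [mulA, Pi.smul_apply, smul_eq_mul, Finset.mul_sum]
  congr! 2
  ring

theorem mulA_smul_right {n : ℕ} (c : ℂ) (x y : V n) : mulA n x (c • y) = c • mulA n x y := by
  ext p
  simp only [mulA, Pi.smul_apply, smul_eq_mul, Finset.mul_sum]
  congr! 2
  ring

theorem isDer_phiD (n : ℕ) : IsDer n (phiD n) := by
  intro x y
  ext p
  simp only [phiD_apply, mulA, Pi.add_apply, Finset.mul_sum, ← Finset.sum_add_distrib]
  refine Finset.sum_congr rfl fun i _ => Finset.sum_congr rfl fun j _ => ?_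
  split_ifs with h
  · rw [← h]
    push_cast
    ring
  · ring

theorem IsDer.smul {n : ℕ} {D : V n →ₗ[ℂ] V n} (hD : IsDer n D) (a : ℂ) : IsDer n (a • D) := by
  intro x y
  simp only [LinearMap.smul_apply, hD x y, smul_add, mulA_smul_left, mulA_smul_right]

theorem eq_single_zero_of_phiD_eq_zero {n : ℕ} {x : V n} (hx : phiD n x = 0) :
    x = Pi.single 0 (x 0) := by
  ext p
  rcases eq_or_ne p 0 with rfl | hp
  · simp
  · have hp' : (p.1 : ℂ) ≠ 0 := Nat.cast_ne_zero.2 fun h => hp (Subtype.ext h)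
    simpa [phiD_apply, hp, hp'] using congr_fun hx p

theorem phiD_ne_zero {n : ℕ} (hn : 1 ≤ n) : phiD n ≠ 0 := fun h => by
  simpa [phiD_single] using LinearMap.congr_fun h (Pi.single (⟨1, by simp [hn]⟩ : Ix n) 1)

namespace IsDer

variable {n : ℕ} {D : V n →ₗ[ℂ] V n}

theorem apply_single_zero (hD : IsDer n D) :
    D (Pi.single 0 1) = Pi.single 0 (D (Pi.single 0 1) 0) := by
  apply eq_single_zero_of_phiD_eq_zero
  have h := hD (Pi.single 0 1) (Pi.single 0 1)
  rwa [mulA_single_zero_left, map_zero, mulA_single_zero_right, one_smul, mulA_single_zero_left,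
    add_zero, eq_comm] at h

theorem sub_mul_apply_single (hD : IsDer n D) (i p : Ix n) :
    ((i.1 : ℂ) - p.1) * D (Pi.single i 1) p =
      if p = i then D (Pi.single 0 1) 0 * i.1 else 0 := by
  have h := congr_fun (hD (Pi.single i 1) (Pi.single 0 1)) p
  rw [hD.apply_single_zero, mulA_single_zero_right, mulA_single_zero_right, mulA_single_zero_right,
    phiD_single, map_smul, map_smul] at h
  simp only [one_smul, Pi.smul_apply, Pi.add_apply, smul_eq_mul, phiD_apply] at h
  rcases eq_or_ne p i with rfl | hp
  · rw [Pi.single_eq_same] at h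
    rw [if_pos rfl]
    linear_combination h
  · rw [Pi.single_eq_of_ne hp] at h
    rw [if_neg hp]
    linear_combination h

theorem apply_single_of_ne (hD : IsDer n D) {i p : Ix n} (hp : p ≠ i) :
    D (Pi.single i 1) p = 0 := by
  have h := hD.sub_mul_apply_single i p
  rw [if_neg hp] at h
  exact (mul_eq_zero.1 h).resolve_left
    (sub_ne_zero.2 (Nat.cast_injective.ne fun h' => hp (Subtype.ext h'.symm)))

theorem apply_single_zero_apply_zero (hD : IsDer n D) {u : Ix n} (hu : u.1 ≠ 0) :
    D (Pi.single 0 1) 0 = 0 := by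
  have h := hD.sub_mul_apply_single u u
  rw [if_pos rfl, sub_self, zero_mul, eq_comm] at h
  exact (mul_eq_zero.1 h).resolve_right (Nat.cast_ne_zero.2 hu)

theorem isDiag_toMatrix' (hD : IsDer n D) : (LinearMap.toMatrix' D).IsDiag :=
  fun _ _ h => hD.apply_single_of_ne h

theorem apply_single (hD : IsDer n D) (i : Ix n) (a : ℂ) :
    D (Pi.single i a) = Pi.single i (D (Pi.single i 1) i * a) := by
  ext p
  rw [apply_eq_mul_of_isDiag_toMatrix' hD.isDiag_toMatrix']
  rcases eq_or_ne p i with rfl | hp <;> simp [*]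

theorem apply_single_self_eq_add (hD : IsDer n D) {i j p : Ix n} (hij : i.1 + j.1 = p.1)
    (hi : i.1 ≠ 0) :
    D (Pi.single p 1) p = D (Pi.single i 1) i + D (Pi.single j 1) j := by
  have h := congr_fun (hD (Pi.single i 1) (Pi.single j 1)) p
  rw [apply_eq_mul_of_isDiag_toMatrix' hD.isDiag_toMatrix', hD.apply_single i, hD.apply_single j,
    Pi.add_apply, mulA_single_single_apply, mulA_single_single_apply, mulA_single_single_apply,
    if_pos hij, if_pos hij, if_pos hij] at h
  have hcoef : (i.1 : ℂ) * ((j.1 : ℂ) + 1)⁻¹ ≠ 0 :=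
    mul_ne_zero (Nat.cast_ne_zero.2 hi) (inv_ne_zero (by exact_mod_cast j.1.succ_ne_zero))
  apply mul_right_cancel₀ hcoef
  linear_combination h

theorem apply_single_self_eq_mul (hD : IsDer n D) {u : Ix n} (hu : u.1 = 1) (p : Ix n) :
    D (Pi.single p 1) p = p.1 * D (Pi.single u 1) u := by
  obtain ⟨k, hk⟩ : ∃ k, p.1 = k := ⟨_, rfl⟩
  induction k generalizing p with
  | zero =>
    obtain rfl : p = 0 := Subtype.ext hk
    simp [hD.apply_single_zero_apply_zero (u := u) (by omega)]
  | succ k ih =>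
    have hkn : k ∈ Finset.Icc 0 n :=
      Finset.mem_Icc.2 ⟨k.zero_le, by have := (Finset.mem_Icc.1 p.2).2; omega⟩
    rw [hD.apply_single_self_eq_add (j := ⟨k, hkn⟩) (by change u.1 + k = p.1; omega) (by omega),
      ih ⟨k, hkn⟩ rfl, hk]
    push_cast
    ring

theorem eq_smul_phiD (hD : IsDer n D) {u : Ix n} (hu : u.1 = 1) :
    D = D (Pi.single u 1) u • phiD n := by
  refine LinearMap.ext fun x => funext fun p => ?_
  rw [apply_eq_mul_of_isDiag_toMatrix' hD.isDiag_toMatrix', hD.apply_single_self_eq_mul hu,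
    LinearMap.smul_apply, Pi.smul_apply, phiD_apply, smul_eq_mul]
  ring

end IsDer

theorem stmt16 (n : ℕ) (hn : 1 ≤ n) :
    {D : V n →ₗ[ℂ] V n | IsDer n D}
      = (Submodule.span ℂ {phiD n} : Submodule ℂ (V n →ₗ[ℂ] V n))
    ∧ phiD n ≠ 0 := by
  set u : Ix n := ⟨1, by simp [hn]⟩
  refine ⟨Set.ext fun D => ⟨fun hD => ?_, fun hD => ?_⟩, phiD_ne_zero hn⟩
  · exact Submodule.mem_span_singleton.2 ⟨_, (hD.eq_smul_phiD (u := u) rfl).symm⟩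
  · obtain ⟨a, rfl⟩ := Submodule.mem_span_singleton.1 hD
    exact (isDer_phiD n).smul a
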